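/- Under the zero-loss hypothesis, the inclusion map TP = F_ε(P) ∩ F_{2ε}(G) ↪ F_ε(P) ∪ F_{2ε}(G) induces a bijection from the set of connected components of TP onto the set of connected components of F_ε(P) ∪ F_{2ε}(G). (This is the degree-0, foreground part of the statement that the DIU metric ξ^{err} vanishes: dim ker i₀ = dim coker i₀ = 0.) -/
import Mathlib


open Set Metric

noncomputable section

/-- The plane modeled as `Fin 2 → ℝ` with the Pi (sup) norm. -/
abbrev Plane : Type := Fin 2 → ℝ

/-- The Euclidean plane (for Euclidean-norm disks and annuli). -/
abbrev EPlane : Type := EuclideanSpace ℝ (Fin 2)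

/-- The closed unit pixel `[i-1,i] × [j-1,j]` for a pixel index `(i,j)`. -/
def pixel (p : ℕ × ℕ) : Set Plane :=
  {x | x 0 ∈ Set.Icc ((p.1 : ℝ) - 1) (p.1 : ℝ) ∧ x 1 ∈ Set.Icc ((p.2 : ℝ) - 1) (p.2 : ℝ)}

/-- A binary image `S` lies on the `h × w` grid `{1,…,h} × {1,…,w}`. -/
def OnGrid (S : Set (ℕ × ℕ)) (h w : ℕ) : Prop :=
  S ⊆ Set.Icc 1 h ×ˢ Set.Icc 1 w

/-- The foreground `F(S)` of a binary image. -/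
def fg (S : Set (ℕ × ℕ)) : Set Plane := ⋃ p ∈ S, pixel p

/-- Closed `ε`-thickening `D_ε(X)` with respect to the sup norm. -/
def thick (ε : ℝ) (X : Set Plane) : Set Plane := {y | ∃ x ∈ X, ‖x - y‖ ≤ ε}

/-- `C` is a connected component of `A` (as a subset of the plane). -/
def IsCompOf (C A : Set Plane) : Prop := ∃ x ∈ A, C = connectedComponentIn A x

/-- Two subsets share a boundary edge if their closures intersect in an infinite set. -/
def SharesEdge (C D : Set Plane) : Prop := (closure C ∩ closure D).Infinite

/-- `X` strongly deformation retracts onto `A`. -/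
def SDR (X A : Set Plane) : Prop :=
  ∃ H : C(↥X × unitInterval, ↥X),
    (∀ x, H (x, 0) = x) ∧ (∀ x, ((H (x, 1) : Plane)) ∈ A) ∧
    (∀ a : ↥X, (a : Plane) ∈ A → ∀ t, H (a, t) = a)

def TPset (P G : Set (ℕ × ℕ)) (ε : ℝ) : Set Plane := thick ε (fg P) ∩ thick (2 * ε) (fg G)
def TNset (P G : Set (ℕ × ℕ)) (ε : ℝ) : Set Plane := (thick ε (fg P))ᶜ ∩ (thick (2 * ε) (fg G))ᶜ
def FPset (P G : Set (ℕ × ℕ)) (ε : ℝ) : Set Plane := thick ε (fg P) ∩ (thick (2 * ε) (fg G))ᶜ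
def FNset (P G : Set (ℕ × ℕ)) (ε : ℝ) : Set Plane := (thick ε (fg P))ᶜ ∩ thick (2 * ε) (fg G)

/-- A component `C` (of `FP` or `FN`) is regular: exactly one component of `TP` and exactly
one component of `TN` share a boundary edge with it. -/
def RegularComp (P G : Set (ℕ × ℕ)) (ε : ℝ) (C : Set Plane) : Prop :=
  (∃! T : Set Plane, IsCompOf T (TPset P G ε) ∧ SharesEdge T C) ∧
  (∃! T : Set Plane, IsCompOf T (TNset P G ε) ∧ SharesEdge T C)

/-- The zero-loss hypothesis: every component of `FP` and every component of `FN` is regular. -/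
def ZeroLoss (P G : Set (ℕ × ℕ)) (ε : ℝ) : Prop :=
  (∀ C : Set Plane, IsCompOf C (FPset P G ε) → RegularComp P G ε C) ∧
  (∀ C : Set Plane, IsCompOf C (FNset P G ε) → RegularComp P G ε C)

/-- The intersection of the thickened foregrounds is contained in their union. -/
theorem TPset_subset_union (P G : Set (ℕ × ℕ)) (ε : ℝ) :
    TPset P G ε ⊆ thick ε (fg P) ∪ thick (2 * ε) (fg G) :=
  fun _ hx => Or.inl hx.1

namespace ZL

lemma norm_le_iff {v : Plane} {δ : ℝ} (hδ : 0 ≤ δ) : ‖v‖ ≤ δ ↔ |v 0| ≤ δ ∧ |v 1| ≤ δ := by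
  rw [pi_norm_le_iff_of_nonneg hδ]
  simp [Fin.forall_fin_two, Real.norm_eq_abs]

def Rect (p : ℕ × ℕ) (δ : ℝ) : Set Plane :=
  {x | x 0 ∈ Set.Icc ((p.1:ℝ) - 1 - δ) ((p.1:ℝ) + δ) ∧
       x 1 ∈ Set.Icc ((p.2:ℝ) - 1 - δ) ((p.2:ℝ) + δ)}

def gridFat (δ : ℝ) (S : Set (ℕ × ℕ)) : Set Plane := ⋃ p ∈ S, Rect p δ

lemma clamp_mem {a b u δ : ℝ} (hδ : 0 ≤ δ) (hab : a ≤ b) (h1 : a - δ ≤ u) (h2 : u ≤ b + δ) :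
    max a (min b u) ∈ Icc a b ∧ |max a (min b u) - u| ≤ δ := by
  rcases le_total u a with h | h
  · rw [min_eq_right (le_trans h hab), max_eq_left h]
    exact ⟨⟨le_refl _, hab⟩, by rw [abs_le]; constructor <;> linarith⟩
  · rcases le_total u b with h' | h'
    · rw [min_eq_right h', max_eq_right h]
      exact ⟨⟨h, h'⟩, by simp [abs_le]; exact hδ⟩
    · rw [min_eq_left h', max_eq_right hab]
      exact ⟨⟨hab, le_refl _⟩, by rw [abs_le]; constructor <;> linarith⟩

lemma thick_fg {δ : ℝ} (hδ : 0 ≤ δ) (S : Set (ℕ × ℕ)) : thick δ (fg S) = gridFat δ S := by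
  ext y
  constructor
  · rintro ⟨x, hx, hn⟩
    rw [fg, mem_iUnion₂] at hx
    obtain ⟨p, hp, hxp⟩ := hx
    rw [norm_le_iff hδ] at hn
    obtain ⟨h0, h1⟩ := hn
    simp only [Pi.sub_apply] at h0 h1
    rw [abs_le] at h0 h1
    refine mem_iUnion₂.2 ⟨p, hp, ?_⟩
    obtain ⟨⟨a1, a2⟩, ⟨b1, b2⟩⟩ := hxp
    exact ⟨⟨by linarith, by linarith⟩, ⟨by linarith, by linarith⟩⟩
  · intro hy
    rw [gridFat, mem_iUnion₂] at hy
    obtain ⟨p, hp, hyp⟩ := hy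
    obtain ⟨⟨a1, a2⟩, ⟨b1, b2⟩⟩ := hyp
    have c0 := clamp_mem hδ (a := (p.1:ℝ) - 1) (b := (p.1:ℝ)) (u := y 0) (δ := δ)
      (by linarith) (by linarith) (by linarith)
    have c1 := clamp_mem hδ (a := (p.2:ℝ) - 1) (b := (p.2:ℝ)) (u := y 1) (δ := δ)
      (by linarith) (by linarith) (by linarith)
    refine ⟨![max ((p.1:ℝ) - 1) (min (p.1:ℝ) (y 0)), max ((p.2:ℝ) - 1) (min (p.2:ℝ) (y 1))],
      ?_, ?_⟩
    · refine mem_iUnion₂.2 ⟨p, hp, ?_⟩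
      exact ⟨by simpa using c0.1, by simpa using c1.1⟩
    · rw [norm_le_iff hδ]
      constructor <;> simp [Pi.sub_apply] <;> [exact c0.2; exact c1.2]

lemma isClosed_gridFat {δ : ℝ} {S : Set (ℕ × ℕ)} (hS : S.Finite) : IsClosed (gridFat δ S) := by
  refine Set.Finite.isClosed_biUnion hS fun p _ => ?_
  have : Rect p δ = (fun x : Plane => x 0) ⁻¹' Icc ((p.1:ℝ) - 1 - δ) ((p.1:ℝ) + δ) ∩
      (fun x : Plane => x 1) ⁻¹' Icc ((p.2:ℝ) - 1 - δ) ((p.2:ℝ) + δ) := rfl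
  rw [this]
  exact (isClosed_Icc.preimage (continuous_apply 0)).inter
    (isClosed_Icc.preimage (continuous_apply 1))

lemma onGrid_finite {S : Set (ℕ × ℕ)} {h w : ℕ} (hS : OnGrid S h w) : S.Finite :=
  Set.Finite.subset ((Set.finite_Icc 1 h).prod (Set.finite_Icc 1 w)) hS


/-! ### Axis / quadrant machinery -/

def sideI (u r : ℝ) (s : Bool) : Set ℝ := if s then Icc u (u + r) else Icc (u - r) u

def sig (a b u : ℝ) (s : Bool) : Prop := if s then (a ≤ u ∧ u < b) else (a < u ∧ u ≤ b)

lemma mem_sideI_self {u r : ℝ} (hr : 0 ≤ r) (s : Bool) : u ∈ sideI u r s := by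
  cases s <;> simp [sideI] <;> linarith

lemma sideI_subset {u r : ℝ} (hr : 0 ≤ r) (s : Bool) {v : ℝ} (hv : v ∈ sideI u r s) :
    |v - u| ≤ r := by
  cases s <;> simp [sideI] at hv <;> rw [abs_le] <;> constructor <;> linarith [hv.1, hv.2]

lemma axis_iff {a b u r v : ℝ} (hab : a < b) (hr : 0 < r)
    (h2 : u ≠ a → r < |u - a|) (h3 : u ≠ b → r < |u - b|) :
    (v ∈ Icc a b ∧ |v - u| ≤ r) ↔ ∃ s, sig a b u s ∧ v ∈ sideI u r s := by
  constructor
  · rintro ⟨⟨hav, hvb⟩, habs⟩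
    rw [abs_le] at habs
    obtain ⟨habs1, habs2⟩ := habs
    rcases le_or_gt v u with hvu | huv
    · by_cases hua : u = a
      · subst hua
        have hva : v = u := le_antisymm hvu hav
        exact ⟨true, ⟨le_refl _, hab⟩, by simp [sideI]; constructor <;> linarith⟩
      · have hau : a < u := by
          rcases lt_or_gt_of_ne (Ne.symm hua) with h | h
          · exact h
          · exfalso
            have := h2 hua
            rw [abs_of_neg (by linarith)] at this
            linarith
        have hub : u ≤ b := by
          by_contra hb
          push_neg at hb
          have := h3 (by intro hh; rw [hh] at hb; exact lt_irrefl _ hb)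
          rw [abs_of_pos (by linarith)] at this
          linarith
        exact ⟨false, ⟨hau, hub⟩, by simp [sideI]; constructor <;> linarith⟩
    · have hau : a ≤ u := by
        by_contra hh
        push_neg at hh
        have := h2 (by intro hh2; rw [hh2] at hh; exact lt_irrefl _ hh)
        rw [abs_of_neg (by linarith)] at this
        linarith
      have hub : u < b := lt_of_lt_of_le huv hvb
      exact ⟨true, ⟨hau, hub⟩, by simp [sideI]; constructor <;> linarith⟩
  · rintro ⟨s, hs, hv⟩
    cases s <;> simp [sig, sideI] at hs hv
    · -- s = false
      obtain ⟨hau, hub⟩ := hs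
      obtain ⟨hv1, hv2⟩ := hv
      have hra : r < u - a := by
        have := h2 (by intro hh; rw [hh] at hau; exact lt_irrefl _ hau)
        rwa [abs_of_pos (by linarith)] at this
      exact ⟨⟨by linarith, by linarith⟩, by rw [abs_le]; constructor <;> linarith⟩
    · -- s = true
      obtain ⟨hau, hub⟩ := hs
      obtain ⟨hv1, hv2⟩ := hv
      have hrb : r < b - u := by
        have := h3 (by intro hh; rw [hh] at hub; exact lt_irrefl _ hub)
        rw [abs_of_neg (by linarith)] at this
        linarith
      exact ⟨⟨by linarith, by linarith⟩, by rw [abs_le]; constructor <;> linarith⟩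

def A0 (p : ℕ × ℕ) (δ : ℝ) : ℝ := (p.1:ℝ) - 1 - δ
def B0 (p : ℕ × ℕ) (δ : ℝ) : ℝ := (p.1:ℝ) + δ
def A1 (p : ℕ × ℕ) (δ : ℝ) : ℝ := (p.2:ℝ) - 1 - δ
def B1 (p : ℕ × ℕ) (δ : ℝ) : ℝ := (p.2:ℝ) + δ

lemma rect_eq (p : ℕ × ℕ) (δ : ℝ) :
    Rect p δ = {x : Plane | x 0 ∈ Icc (A0 p δ) (B0 p δ) ∧ x 1 ∈ Icc (A1 p δ) (B1 p δ)} := rfl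

lemma A0_lt_B0 (p : ℕ × ℕ) {δ : ℝ} (hδ : 0 < δ) : A0 p δ < B0 p δ := by
  simp only [A0, B0]; linarith

lemma A1_lt_B1 (p : ℕ × ℕ) {δ : ℝ} (hδ : 0 < δ) : A1 p δ < B1 p δ := by
  simp only [A1, B1]; linarith

def Quad (x : Plane) (r : ℝ) (q : Bool × Bool) : Set Plane :=
  {v | v 0 ∈ sideI (x 0) r q.1 ∧ v 1 ∈ sideI (x 1) r q.2}

def Box (x : Plane) (r : ℝ) : Set Plane := {v | |v 0 - x 0| ≤ r ∧ |v 1 - x 1| ≤ r}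

def LL (x : Plane) : Set Plane := {v | v 0 = x 0 ∨ v 1 = x 1}

def QSet (δ : ℝ) (S : Set (ℕ × ℕ)) (x : Plane) : Set (Bool × Bool) :=
  {q | ∃ p ∈ S, sig (A0 p δ) (B0 p δ) (x 0) q.1 ∧ sig (A1 p δ) (B1 p δ) (x 1) q.2}

def goodr (δ : ℝ) (S : Set (ℕ × ℕ)) (x : Plane) (r : ℝ) : Prop :=
  0 < r ∧ ∀ p ∈ S,
    (x 0 ≠ A0 p δ → r < |x 0 - A0 p δ|) ∧ (x 0 ≠ B0 p δ → r < |x 0 - B0 p δ|) ∧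
    (x 1 ≠ A1 p δ → r < |x 1 - A1 p δ|) ∧ (x 1 ≠ B1 p δ → r < |x 1 - B1 p δ|)

lemma mem_quad_self {x : Plane} {r : ℝ} (hr : 0 ≤ r) (q : Bool × Bool) : x ∈ Quad x r q :=
  ⟨mem_sideI_self hr q.1, mem_sideI_self hr q.2⟩

lemma quad_subset_box {x : Plane} {r : ℝ} (hr : 0 ≤ r) (q : Bool × Bool) :
    Quad x r q ⊆ Box x r := fun v hv => ⟨sideI_subset hr q.1 hv.1, sideI_subset hr q.2 hv.2⟩

lemma sideI_unique {u r v : ℝ} {s s' : Bool} (hss : s ≠ s')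
    (h : v ∈ sideI u r s) (h' : v ∈ sideI u r s') : v = u := by
  cases s <;> cases s' <;> simp at hss <;> simp [sideI] at h h' <;>
    exact le_antisymm (by linarith [h.2, h'.2, h.1, h'.1]) (by linarith [h.2, h'.2, h.1, h'.1])

lemma quad_inter_LL {x : Plane} {r : ℝ} {q q' : Bool × Bool} (hq : q ≠ q') :
    Quad x r q ∩ Quad x r q' ⊆ LL x := by
  rintro v ⟨⟨h0, h1⟩, ⟨h0', h1'⟩⟩
  by_cases h : q.1 = q'.1
  · have h2 : q.2 ≠ q'.2 := fun hh => hq (Prod.ext h hh)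
    exact Or.inr (sideI_unique h2 h1 h1')
  · exact Or.inl (sideI_unique h h0 h0')

lemma convex_coord (i : Fin 2) {s : Set ℝ} (hs : Convex ℝ s) :
    Convex ℝ {v : Plane | v i ∈ s} := by
  have : {v : Plane | v i ∈ s} = (LinearMap.proj i : Plane →ₗ[ℝ] ℝ) ⁻¹' s := rfl
  rw [this]
  exact hs.linear_preimage _

lemma convex_sideI (u r : ℝ) (s : Bool) : Convex ℝ (sideI u r s) := by
  cases s <;> simp [sideI] <;> exact convex_Icc _ _

lemma convex_quad (x : Plane) (r : ℝ) (q : Bool × Bool) : Convex ℝ (Quad x r q) :=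
  (convex_coord 0 (convex_sideI _ _ _)).inter (convex_coord 1 (convex_sideI _ _ _))

lemma decomp {δ : ℝ} {S : Set (ℕ × ℕ)} {x : Plane} {r : ℝ} (hδ : 0 < δ)
    (hg : goodr δ S x r) :
    gridFat δ S ∩ Box x r = ⋃ q ∈ QSet δ S x, Quad x r q := by
  ext v
  constructor
  · rintro ⟨hA, hb0, hb1⟩
    rw [gridFat, mem_iUnion₂] at hA
    obtain ⟨p, hp, hv0, hv1⟩ := hA
    obtain ⟨hg1, hg2, hg3, hg4⟩ := hg.2 p hp
    obtain ⟨s, hsig0, hside0⟩ := (axis_iff (A0_lt_B0 p hδ) hg.1 hg1 hg2).1 ⟨hv0, hb0⟩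
    obtain ⟨t, hsig1, hside1⟩ := (axis_iff (A1_lt_B1 p hδ) hg.1 hg3 hg4).1 ⟨hv1, hb1⟩
    exact mem_iUnion₂.2 ⟨(s, t), ⟨p, hp, hsig0, hsig1⟩, hside0, hside1⟩
  · intro hv
    rw [mem_iUnion₂] at hv
    obtain ⟨q, ⟨p, hp, hsig0, hsig1⟩, hside0, hside1⟩ := hv
    obtain ⟨hg1, hg2, hg3, hg4⟩ := hg.2 p hp
    obtain ⟨hv0, hb0⟩ := (axis_iff (A0_lt_B0 p hδ) hg.1 hg1 hg2).2 ⟨q.1, hsig0, hside0⟩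
    obtain ⟨hv1, hb1⟩ := (axis_iff (A1_lt_B1 p hδ) hg.1 hg3 hg4).2 ⟨q.2, hsig1, hside1⟩
    exact ⟨mem_iUnion₂.2 ⟨p, hp, hv0, hv1⟩, hb0, hb1⟩

lemma quad_subset_grid {δ : ℝ} {S : Set (ℕ × ℕ)} {x : Plane} {r : ℝ} (hδ : 0 < δ)
    (hg : goodr δ S x r) {q : Bool × Bool} (hq : q ∈ QSet δ S x) :
    Quad x r q ⊆ gridFat δ S := by
  obtain ⟨p, hp, hsig0, hsig1⟩ := hq
  intro v hv
  obtain ⟨hg1, hg2, hg3, hg4⟩ := hg.2 p hp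
  obtain ⟨hv0, _⟩ := (axis_iff (A0_lt_B0 p hδ) hg.1 hg1 hg2).2 ⟨q.1, hsig0, hv.1⟩
  obtain ⟨hv1, _⟩ := (axis_iff (A1_lt_B1 p hδ) hg.1 hg3 hg4).2 ⟨q.2, hsig1, hv.2⟩
  exact mem_iUnion₂.2 ⟨p, hp, hv0, hv1⟩

/-! ### Connectivity of a quadrant minus a subset of the axes -/

def corner (x : Plane) (r : ℝ) (q : Bool × Bool) : Plane :=
  ![x 0 + (if q.1 then r else -r), x 1 + (if q.2 then r else -r)]

lemma corner_mem {x : Plane} {r : ℝ} (hr : 0 ≤ r) (q : Bool × Bool) :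
    corner x r q ∈ Quad x r q := by
  constructor <;> rcases q with ⟨s, t⟩ <;> [cases s; cases t] <;>
    simp [corner, sideI] <;> linarith

lemma corner_not_LL {x : Plane} {r : ℝ} (hr : 0 < r) (q : Bool × Bool) :
    corner x r q ∉ LL x := by
  rcases q with ⟨s, t⟩
  rintro (h | h) <;> [cases s; cases t] <;> simp [corner] at h <;> linarith

lemma seg_axis {u r pu cu a b : ℝ} {s : Bool} (hr : 0 < r) (hp : pu ∈ sideI u r s)
    (hc : cu = u + (if s then r else -r)) (ha : 0 ≤ a) (hb : 0 < b) (hab : a + b = 1) :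
    a * pu + b * cu ≠ u := by
  cases s <;> simp [sideI] at hp hc <;> subst hc <;> intro h
  · have key : a * (u - pu) = -(b * r) := by linear_combination u * hab - h
    linarith [mul_nonneg ha (sub_nonneg.2 hp.2), mul_pos hb hr]
  · have key : a * (pu - u) = -(b * r) := by linear_combination h - u * hab
    linarith [mul_nonneg ha (sub_nonneg.2 hp.1), mul_pos hb hr]

lemma seg_coord {x : Plane} {r : ℝ} {q : Bool × Bool} {p v : Plane} (hr : 0 < r)
    (hp : p ∈ Quad x r q) (hv : v ∈ segment ℝ p (corner x r q)) (hvp : v ≠ p) :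
    v ∈ Quad x r q ∧ v ∉ LL x := by
  have hvq : v ∈ Quad x r q :=
    (convex_quad x r q).segment_subset hp (corner_mem hr.le q) hv
  obtain ⟨a, b, ha, hb, hab, hv'⟩ := hv
  have hb0 : 0 < b := by
    rcases lt_or_eq_of_le hb with h | h
    · exact h
    · exfalso; apply hvp
      rw [← hv', ← h, zero_smul, add_zero]
      have : a = 1 := by linarith
      rw [this, one_smul]
  refine ⟨hvq, ?_⟩
  rintro (h | h)
  · have h0 : v 0 = a * p 0 + b * corner x r q 0 := by
      rw [← hv']; simp [Pi.add_apply, Pi.smul_apply, smul_eq_mul]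
    exact seg_axis (cu := corner x r q 0) hr hp.1 (by simp [corner, Matrix.cons_val_zero]) ha hb0 hab
      (by rw [← h0]; exact h)
  · have h1 : v 1 = a * p 1 + b * corner x r q 1 := by
      rw [← hv']; simp [Pi.add_apply, Pi.smul_apply, smul_eq_mul]
    exact seg_axis (cu := corner x r q 1) hr hp.2 (by simp [corner, Matrix.cons_val_one, Matrix.head_cons]) ha hb0 hab
      (by rw [← h1]; exact h)

lemma quad_diff_preconn {x : Plane} {r : ℝ} {q : Bool × Bool} {M : Set Plane}
    (hr : 0 < r) (hM : M ⊆ LL x) : IsPreconnected (Quad x r q \ M) := by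
  have heq : Quad x r q \ M =
      ⋃₀ {t | ∃ p ∈ Quad x r q \ M, t = segment ℝ p (corner x r q)} := by
    ext v
    constructor
    · intro hv
      exact ⟨segment ℝ v (corner x r q), ⟨v, hv, rfl⟩, left_mem_segment ℝ _ _⟩
    · rintro ⟨t, ⟨p, hp, rfl⟩, hv⟩
      by_cases hvp : v = p
      · rwa [hvp]
      · obtain ⟨h1, h2⟩ := seg_coord hr hp.1 hv hvp
        exact ⟨h1, fun hm => h2 (hM hm)⟩
  rw [heq]
  apply isPreconnected_sUnion (corner x r q)
  · rintro t ⟨p, hp, rfl⟩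
    exact right_mem_segment ℝ _ _
  · rintro t ⟨p, hp, rfl⟩
    exact (convex_segment _ _).isPreconnected

lemma quad_subset_closure_diff {x : Plane} {r : ℝ} {q : Bool × Bool} {M : Set Plane}
    (hr : 0 < r) (hM : M ⊆ LL x) : Quad x r q ⊆ closure (Quad x r q \ M) := by
  intro p hp
  rw [Metric.mem_closure_iff]
  intro η hη
  by_cases hpc : p = corner x r q
  · refine ⟨corner x r q, ⟨corner_mem hr.le q, fun hm => corner_not_LL hr q (hM hm)⟩, ?_⟩
    rw [hpc]; simpa using hη
  · set c := corner x r q with hc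
    have hd : 0 < dist p c := dist_pos.2 hpc
    set θ : ℝ := min 1 (η / (2 * dist p c)) with hθdef
    have hθ0 : 0 < θ := lt_min one_pos (by positivity)
    have hθ1 : θ ≤ 1 := min_le_left _ _
    set v : Plane := (1 - θ) • p + θ • c with hv
    have hseg : v ∈ segment ℝ p c := ⟨1 - θ, θ, by linarith, hθ0.le, by ring, rfl⟩
    have hvp : v ≠ p := by
      intro h
      apply hpc
      have h2 : θ • (c - p) = v - p := by rw [hv]; module
      rw [h, sub_self] at h2
      have h3 : c - p = 0 := by
        rcases smul_eq_zero.1 h2 with h' | h'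
        · exact absurd h' (ne_of_gt hθ0)
        · exact h'
      exact (sub_eq_zero.1 h3).symm
    obtain ⟨h1, h2⟩ := seg_coord hr hp hseg hvp
    refine ⟨v, ⟨h1, fun hm => h2 (hM hm)⟩, ?_⟩
    have : dist p v = θ * dist p c := by
      rw [dist_eq_norm, dist_eq_norm]
      have : p - v = θ • (p - c) := by
        rw [hv]; module
      rw [this, norm_smul, Real.norm_eq_abs, abs_of_pos hθ0]
    rw [this]
    have : θ ≤ η / (2 * dist p c) := min_le_right _ _
    calc θ * dist p c ≤ (η / (2 * dist p c)) * dist p c := by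
          apply mul_le_mul_of_nonneg_right this hd.le
      _ = η / 2 := by field_simp
      _ < η := by linarith

/-! ### Choice of a good radius -/

lemma goodr_mono {δ : ℝ} {S : Set (ℕ × ℕ)} {x : Plane} {r r' : ℝ}
    (h : goodr δ S x r) (h0 : 0 < r') (hle : r' ≤ r) : goodr δ S x r' := by
  refine ⟨h0, fun p hp => ?_⟩
  obtain ⟨h1, h2, h3, h4⟩ := h.2 p hp
  exact ⟨fun hne => lt_of_le_of_lt hle (h1 hne), fun hne => lt_of_le_of_lt hle (h2 hne),
    fun hne => lt_of_le_of_lt hle (h3 hne), fun hne => lt_of_le_of_lt hle (h4 hne)⟩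

lemma exists_goodr {δ₁ δ₂ : ℝ} {S₁ S₂ : Set (ℕ × ℕ)} (h₁ : S₁.Finite) (h₂ : S₂.Finite)
    (x : Plane) : ∃ r : ℝ, 0 < r ∧ goodr δ₁ S₁ x r ∧ goodr δ₂ S₂ x r := by
  classical
  set D : Set ℝ :=
    (⋃ p ∈ S₁, ({|x 0 - A0 p δ₁|, |x 0 - B0 p δ₁|, |x 1 - A1 p δ₁|, |x 1 - B1 p δ₁|} : Set ℝ)) ∪
    (⋃ p ∈ S₂, ({|x 0 - A0 p δ₂|, |x 0 - B0 p δ₂|, |x 1 - A1 p δ₂|, |x 1 - B1 p δ₂|} : Set ℝ))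
    with hD
  have hDfin : D.Finite := by
    apply Set.Finite.union <;>
      [skip; skip] <;>
      [exact Set.Finite.biUnion h₁ fun p _ => (Set.finite_singleton _).insert _ |>.insert _
        |>.insert _;
       exact Set.Finite.biUnion h₂ fun p _ => (Set.finite_singleton _).insert _ |>.insert _
        |>.insert _]
  have hTfin : ((insert (1:ℝ) D) ∩ Ioi 0).Finite := (hDfin.insert 1).inter_of_left _
  have h1T : (1:ℝ) ∈ (insert (1:ℝ) D) ∩ Ioi 0 := ⟨Set.mem_insert _ _, by norm_num⟩
  have hne : hTfin.toFinset.Nonempty := ⟨1, (Set.Finite.mem_toFinset _).2 h1T⟩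
  set m : ℝ := hTfin.toFinset.min' hne with hm
  have hm_mem : m ∈ (insert (1:ℝ) D) ∩ Ioi 0 :=
    (Set.Finite.mem_toFinset _).1 (hTfin.toFinset.min'_mem hne)
  have hm_pos : 0 < m := hm_mem.2
  have hle : ∀ t ∈ (insert (1:ℝ) D) ∩ Ioi 0, m ≤ t := fun t ht =>
    hTfin.toFinset.min'_le t ((Set.Finite.mem_toFinset _).2 ht)
  have key : ∀ t, t ∈ D → 0 < t → m / 2 < t := fun t ht h0 =>
    lt_of_lt_of_le (by linarith) (hle t ⟨Set.mem_insert_of_mem _ ht, h0⟩)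
  refine ⟨m / 2, by linarith, ⟨by linarith, fun p hp => ?_⟩, ⟨by linarith, fun p hp => ?_⟩⟩
  · refine ⟨fun hne => key _ ?_ (abs_pos.2 (sub_ne_zero.2 hne)),
      fun hne => key _ ?_ (abs_pos.2 (sub_ne_zero.2 hne)),
      fun hne => key _ ?_ (abs_pos.2 (sub_ne_zero.2 hne)),
      fun hne => key _ ?_ (abs_pos.2 (sub_ne_zero.2 hne))⟩ <;>
    · exact Set.mem_union_left _ (mem_iUnion₂.2 ⟨p, hp, by simp⟩)
  · refine ⟨fun hne => key _ ?_ (abs_pos.2 (sub_ne_zero.2 hne)),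
      fun hne => key _ ?_ (abs_pos.2 (sub_ne_zero.2 hne)),
      fun hne => key _ ?_ (abs_pos.2 (sub_ne_zero.2 hne)),
      fun hne => key _ ?_ (abs_pos.2 (sub_ne_zero.2 hne))⟩ <;>
    · exact Set.mem_union_right _ (mem_iUnion₂.2 ⟨p, hp, by simp⟩)

/-! ### Edges between adjacent quadrants are infinite -/

lemma sideI_infinite {u r : ℝ} (hr : 0 < r) (s : Bool) : (sideI u r s).Infinite := by
  cases s <;> simp [sideI] <;> exact Set.Icc_infinite (by linarith)

lemma edge0_infinite {x : Plane} {r : ℝ} (hr : 0 < r) (t : Bool) :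
    (Quad x r (true, t) ∩ Quad x r (false, t)).Infinite := by
  have hsub : (fun y : ℝ => (![x 0, y] : Plane)) '' sideI (x 1) r t ⊆
      Quad x r (true, t) ∩ Quad x r (false, t) := by
    rintro v ⟨y, hy, rfl⟩
    refine ⟨⟨?_, ?_⟩, ⟨?_, ?_⟩⟩ <;> simp [Matrix.cons_val_zero, Matrix.cons_val_one] <;>
      first
        | exact mem_sideI_self hr.le _
        | exact hy
  exact Set.Infinite.mono hsub ((sideI_infinite hr t).image
    (fun y _ y' _ h => by simpa using congrFun h 1))

lemma edge1_infinite {x : Plane} {r : ℝ} (hr : 0 < r) (s : Bool) :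
    (Quad x r (s, true) ∩ Quad x r (s, false)).Infinite := by
  have hsub : (fun y : ℝ => (![y, x 1] : Plane)) '' sideI (x 0) r s ⊆
      Quad x r (s, true) ∩ Quad x r (s, false) := by
    rintro v ⟨y, hy, rfl⟩
    refine ⟨⟨?_, ?_⟩, ⟨?_, ?_⟩⟩ <;> simp [Matrix.cons_val_zero, Matrix.cons_val_one] <;>
      first
        | exact mem_sideI_self hr.le _
        | exact hy
  exact Set.Infinite.mono hsub ((sideI_infinite hr s).image
    (fun y _ y' _ h => by simpa using congrFun h 0))

lemma sig_forced {a b u : ℝ} {s : Bool} (h : sig a b u s) (h' : ¬ sig a b u (!s)) :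
    u = (if s then a else b) := by
  cases s <;> simp [sig] at h h' ⊢ <;> obtain ⟨h1, h2⟩ := h <;> by_contra hne <;>
    rcases lt_or_gt_of_ne hne with hh | hh
  · linarith [h' h1.le]
  · linarith
  · linarith
  · linarith [h' hh]

/-- Endpoint values of a fattened grid family. -/
def EP (δ : ℝ) (S : Set (ℕ × ℕ)) : Set ℝ :=
  {e | ∃ p ∈ S, e = A0 p δ ∨ e = B0 p δ ∨ e = A1 p δ ∨ e = B1 p δ}

/-! ### Local structure lemmas -/

lemma grid_box_preconn {δ : ℝ} {S : Set (ℕ × ℕ)} {x : Plane} {r : ℝ} (hδ : 0 < δ)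
    (hg : goodr δ S x r) : IsPreconnected (gridFat δ S ∩ Box x r) := by
  rw [decomp hδ hg, ← Set.sUnion_image]
  apply isPreconnected_sUnion x
  · rintro t ⟨q, hq, rfl⟩
    exact mem_quad_self hg.1.le q
  · rintro t ⟨q, hq, rfl⟩
    exact (convex_quad x r q).isPreconnected

lemma tp_box_preconn {δ₁ δ₂ : ℝ} {S₁ S₂ : Set (ℕ × ℕ)} {x : Plane} {r : ℝ}
    (hδ₁ : 0 < δ₁) (hδ₂ : 0 < δ₂) (hg₁ : goodr δ₁ S₁ x r) (hg₂ : goodr δ₂ S₂ x r) :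
    IsPreconnected (gridFat δ₁ S₁ ∩ gridFat δ₂ S₂ ∩ Box x r) := by
  have heq : gridFat δ₁ S₁ ∩ gridFat δ₂ S₂ ∩ Box x r =
      ⋃₀ ((fun qq : (Bool × Bool) × (Bool × Bool) => Quad x r qq.1 ∩ Quad x r qq.2) ''
        (QSet δ₁ S₁ x ×ˢ QSet δ₂ S₂ x)) := by
    have h2 : gridFat δ₁ S₁ ∩ gridFat δ₂ S₂ ∩ Box x r =
        (gridFat δ₁ S₁ ∩ Box x r) ∩ (gridFat δ₂ S₂ ∩ Box x r) := by
      ext v; constructor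
      · rintro ⟨⟨h1, h2⟩, h3⟩; exact ⟨⟨h1, h3⟩, h2, h3⟩
      · rintro ⟨⟨h1, h3⟩, h2, _⟩; exact ⟨⟨h1, h2⟩, h3⟩
    rw [h2, decomp hδ₁ hg₁, decomp hδ₂ hg₂]
    ext v; constructor
    · rintro ⟨hv1, hv2⟩
      rw [mem_iUnion₂] at hv1 hv2
      obtain ⟨q, hq, hvq⟩ := hv1
      obtain ⟨q', hq', hvq'⟩ := hv2
      exact ⟨_, ⟨(q, q'), ⟨hq, hq'⟩, rfl⟩, hvq, hvq'⟩
    · rintro ⟨t, ⟨⟨q, q'⟩, ⟨hq, hq'⟩, rfl⟩, hvq, hvq'⟩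
      exact ⟨mem_iUnion₂.2 ⟨q, hq, hvq⟩, mem_iUnion₂.2 ⟨q', hq', hvq'⟩⟩
  rw [heq]
  apply isPreconnected_sUnion x
  · rintro t ⟨⟨q, q'⟩, _, rfl⟩
    exact ⟨mem_quad_self hg₁.1.le q, mem_quad_self hg₁.1.le q'⟩
  · rintro t ⟨⟨q, q'⟩, _, rfl⟩
    exact ((convex_quad x r q).inter (convex_quad x r q')).isPreconnected

lemma tp_walk {δ₁ δ₂ : ℝ} {S₁ S₂ : Set (ℕ × ℕ)} {x : Plane} {r : ℝ}
    (hδ₁ : 0 < δ₁) (hδ₂ : 0 < δ₂) (hg₁ : goodr δ₁ S₁ x r) (hg₂ : goodr δ₂ S₂ x r)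
    (hsep : ∀ e₁ ∈ EP δ₁ S₁, ∀ e₂ ∈ EP δ₂ S₂, e₁ ≠ e₂)
    (hx : x ∈ gridFat δ₂ S₂) {d : Plane}
    (hd : d ∈ (gridFat δ₁ S₁ \ gridFat δ₂ S₂) ∩ Box x r) :
    ∃ W, W ⊆ gridFat δ₁ S₁ \ gridFat δ₂ S₂ ∧ IsPreconnected W ∧ d ∈ W ∧
      ∃ I, I ⊆ closure W ∩ (gridFat δ₁ S₁ ∩ gridFat δ₂ S₂ ∩ Box x r) ∧ I.Infinite := by
  obtain ⟨⟨hdA, hdB⟩, hdBox⟩ := hd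
  have hr : 0 < r := hg₁.1
  -- the quadrant containing d
  have hdq' : d ∈ ⋃ q ∈ QSet δ₁ S₁ x, Quad x r q := by
    rw [← decomp hδ₁ hg₁]; exact ⟨hdA, hdBox⟩
  rw [mem_iUnion₂] at hdq'
  obtain ⟨q, hqSA, hdq⟩ := hdq'
  have hqSB : q ∉ QSet δ₂ S₂ x := fun h => hdB (quad_subset_grid hδ₂ hg₂ h hdq)
  -- masks are contained in the axes
  have maskLL : ∀ qq : Bool × Bool, qq ∉ QSet δ₂ S₂ x →
      gridFat δ₂ S₂ ∩ Quad x r qq ⊆ LL x := by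
    intro qq hqq v ⟨hvB, hvq⟩
    have : v ∈ ⋃ q' ∈ QSet δ₂ S₂ x, Quad x r q' := by
      rw [← decomp hδ₂ hg₂]; exact ⟨hvB, quad_subset_box hr.le qq hvq⟩
    rw [mem_iUnion₂] at this
    obtain ⟨q', hq', hvq'⟩ := this
    exact quad_inter_LL (fun hh => hqq (by rw [hh]; exact hq')) ⟨hvq, hvq'⟩
  have diff_eq : ∀ qq : Bool × Bool,
      Quad x r qq \ gridFat δ₂ S₂ = Quad x r qq \ (gridFat δ₂ S₂ ∩ Quad x r qq) := by
    intro qq; ext v; constructor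
    · rintro ⟨h1, h2⟩; exact ⟨h1, fun hh => h2 hh.1⟩
    · rintro ⟨h1, h2⟩; exact ⟨h1, fun hh => h2 ⟨hh, h1⟩⟩
  have piece_preconn : ∀ qq : Bool × Bool, qq ∉ QSet δ₂ S₂ x →
      IsPreconnected (Quad x r qq \ gridFat δ₂ S₂) := by
    intro qq hqq
    rw [diff_eq qq]
    exact quad_diff_preconn hr (maskLL qq hqq)
  have piece_closure : ∀ qq : Bool × Bool, qq ∉ QSet δ₂ S₂ x →
      Quad x r qq ⊆ closure (Quad x r qq \ gridFat δ₂ S₂) := by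
    intro qq hqq
    rw [diff_eq qq]
    exact quad_subset_closure_diff hr (maskLL qq hqq)
  have edge_inf : ∀ qq qq' : Bool × Bool,
      (qq.1 = !qq'.1 ∧ qq.2 = qq'.2) ∨ (qq.1 = qq'.1 ∧ qq.2 = !qq'.2) →
      (Quad x r qq ∩ Quad x r qq').Infinite := by
    rintro ⟨s, t⟩ ⟨s', t'⟩ (⟨h1, h2⟩ | ⟨h1, h2⟩) <;> simp at h1 h2 <;> subst h1 <;> subst h2
    · cases s' <;>
        [exact edge0_infinite hr _ ; exact (edge0_infinite hr _).mono fun v hv => ⟨hv.2, hv.1⟩]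
    · cases t' <;>
        [exact edge1_infinite hr _ ; exact (edge1_infinite hr _).mono fun v hv => ⟨hv.2, hv.1⟩]
  by_cases h1 : (!q.1, q.2) ∈ QSet δ₂ S₂ x
  · refine ⟨Quad x r q \ gridFat δ₂ S₂,
      fun v hv => ⟨quad_subset_grid hδ₁ hg₁ hqSA hv.1, hv.2⟩,
      piece_preconn q hqSB, ⟨hdq, hdB⟩,
      Quad x r q ∩ Quad x r (!q.1, q.2), fun v hv => ?_, edge_inf _ _ (Or.inl ⟨(Bool.not_not q.1).symm, rfl⟩)⟩
    exact ⟨piece_closure q hqSB hv.1,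
      ⟨quad_subset_grid hδ₁ hg₁ hqSA hv.1, quad_subset_grid hδ₂ hg₂ h1 hv.2⟩,
      quad_subset_box hr.le _ hv.1⟩
  · by_cases h2 : (q.1, !q.2) ∈ QSet δ₂ S₂ x
    · refine ⟨Quad x r q \ gridFat δ₂ S₂,
        fun v hv => ⟨quad_subset_grid hδ₁ hg₁ hqSA hv.1, hv.2⟩,
        piece_preconn q hqSB, ⟨hdq, hdB⟩,
        Quad x r q ∩ Quad x r (q.1, !q.2), fun v hv => ?_, edge_inf _ _ (Or.inr ⟨rfl, (Bool.not_not q.2).symm⟩)⟩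
      exact ⟨piece_closure q hqSB hv.1,
        ⟨quad_subset_grid hδ₁ hg₁ hqSA hv.1, quad_subset_grid hδ₂ hg₂ h2 hv.2⟩,
        quad_subset_box hr.le _ hv.1⟩
    · -- diagonal case
      have hxBox : x ∈ Box x r := by constructor <;> simp [hr.le]
      have hxq' : x ∈ ⋃ q' ∈ QSet δ₂ S₂ x, Quad x r q' := by
        rw [← decomp hδ₂ hg₂]; exact ⟨hx, hxBox⟩
      rw [mem_iUnion₂] at hxq'
      obtain ⟨qop, hqop, _⟩ := hxq'
      have hSBonly : ∀ q', q' ∈ QSet δ₂ S₂ x → q' = (!q.1, !q.2) := by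
        rintro ⟨s', t'⟩ hq'
        obtain ⟨s, t⟩ := q
        cases s <;> cases t <;> cases s' <;> cases t' <;>
          simp only [Bool.not_true, Bool.not_false] at h1 h2 ⊢ <;>
          first
            | rfl
            | exact absurd hq' hqSB
            | exact absurd hq' h1
            | exact absurd hq' h2
      have hqope : qop = (!q.1, !q.2) := hSBonly qop hqop
      subst hqope
      -- arithmetic: x is at an endpoint of the δ₂-family in both axes
      obtain ⟨p, hp, hs0, hs1⟩ := hqSA
      obtain ⟨p₂, hp₂, ht0, ht1⟩ := hqop
      have hnot0 : ¬ sig (A0 p₂ δ₂) (B0 p₂ δ₂) (x 0) q.1 := by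
        intro hh
        exact h2 ⟨p₂, hp₂, hh, ht1⟩
      have hnot1 : ¬ sig (A1 p₂ δ₂) (B1 p₂ δ₂) (x 1) q.2 := by
        intro hh
        exact h1 ⟨p₂, hp₂, ht0, hh⟩
      have hx0e : x 0 = (if !q.1 then A0 p₂ δ₂ else B0 p₂ δ₂) :=
        sig_forced ht0 (by rwa [Bool.not_not])
      have hx1e : x 1 = (if !q.2 then A1 p₂ δ₂ else B1 p₂ δ₂) :=
        sig_forced ht1 (by rwa [Bool.not_not])
      have hx0EP : x 0 ∈ EP δ₂ S₂ := by
        rw [hx0e]; cases q.1 <;> simp <;> exact ⟨p₂, hp₂, by simp⟩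
      -- the adjacent quadrant (!q.1, q.2) is in the δ₁-family
      have hs0' : sig (A0 p δ₁) (B0 p δ₁) (x 0) (!q.1) := by
        by_contra hh
        have := sig_forced hs0 hh
        have hmem : x 0 ∈ EP δ₁ S₁ := by
          rw [this]; cases q.1 <;> simp <;> exact ⟨p, hp, by simp⟩
        exact hsep _ hmem _ hx0EP rfl
      have hq2SA : ((!q.1, q.2) : Bool × Bool) ∈ QSet δ₁ S₁ x := ⟨p, hp, hs0', hs1⟩
      have hq2SB : ((!q.1, q.2) : Bool × Bool) ∉ QSet δ₂ S₂ x := by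
        intro hh
        have heq2 : q.2 = !q.2 := congrArg Prod.snd (hSBonly _ hh)
        cases hqq : q.2 <;> rw [hqq] at heq2 <;> simp at heq2
      -- the midpoint of the shared edge
      set mpt : Plane := ![x 0, x 1 + (if q.2 then r / 2 else -(r / 2))] with hmpt
      have hmq : mpt ∈ Quad x r q := by
        constructor
        · simpa [hmpt] using mem_sideI_self hr.le q.1
        · cases hq2 : q.2 <;> simp [hmpt, sideI, hq2] <;> constructor <;> linarith
      have hmq2 : mpt ∈ Quad x r (!q.1, q.2) := by
        constructor
        · simpa [hmpt] using mem_sideI_self hr.le (!q.1)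
        · cases hq2 : q.2 <;> simp [hmpt, sideI, hq2] <;> constructor <;> linarith
      have hmB : mpt ∉ gridFat δ₂ S₂ := by
        intro hh
        have hmBox : mpt ∈ Box x r := by
          constructor
          · have h20 : mpt 0 = x 0 := by simp [hmpt]
            rw [h20, sub_self, abs_zero]; exact hr.le
          · have h21 : mpt 1 = x 1 + (if q.2 = true then r / 2 else -(r / 2)) := by
              simp [hmpt]
            rw [h21]
            have habs : ∀ c : ℝ, |c| ≤ r → |x 1 + c - x 1| ≤ r := by
              intro c hc; rwa [add_sub_cancel_left]
            apply habs
            cases q.2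
            · rw [if_neg (by simp), abs_neg, abs_of_nonneg (by linarith)]; linarith
            · rw [if_pos rfl, abs_of_nonneg (by linarith)]; linarith
        have : mpt ∈ ⋃ q' ∈ QSet δ₂ S₂ x, Quad x r q' := by
          rw [← decomp hδ₂ hg₂]; exact ⟨hh, hmBox⟩
        rw [mem_iUnion₂] at this
        obtain ⟨q', hq', hmq'⟩ := this
        rw [hSBonly q' hq'] at hmq'
        have := hmq'.2
        cases hq2 : q.2 <;> rw [hq2] at this <;> simp [hmpt, sideI, hq2] at this <;>
          linarith [this.1, this.2]
      refine ⟨(Quad x r q \ gridFat δ₂ S₂) ∪ (Quad x r (!q.1, q.2) \ gridFat δ₂ S₂),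
        ?_, ?_, Or.inl ⟨hdq, hdB⟩,
        Quad x r (!q.1, q.2) ∩ Quad x r (!q.1, !q.2), fun v hv => ?_, ?_⟩
      · rintro v (⟨hv1, hv2⟩ | ⟨hv1, hv2⟩)
        · exact ⟨quad_subset_grid hδ₁ hg₁ ⟨p, hp, hs0, hs1⟩ hv1, hv2⟩
        · exact ⟨quad_subset_grid hδ₁ hg₁ hq2SA hv1, hv2⟩
      · exact IsPreconnected.union mpt ⟨hmq, hmB⟩ ⟨hmq2, hmB⟩
          (piece_preconn q hqSB) (piece_preconn _ hq2SB)
      · refine ⟨closure_mono subset_union_right (piece_closure _ hq2SB hv.1), ?_, ?_⟩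
        · exact ⟨quad_subset_grid hδ₁ hg₁ hq2SA hv.1, quad_subset_grid hδ₂ hg₂ ⟨p₂, hp₂, ht0, ht1⟩ hv.2⟩
        · exact quad_subset_box hr.le _ hv.1
      · exact edge_inf _ _ (Or.inr ⟨rfl, (Bool.not_not q.2).symm⟩)

end ZL

/-! ### Glue: conversions and the component-value function -/

namespace ZL

variable (P G : Set (ℕ × ℕ)) (ε : ℝ)

lemma TP_eq (hε0 : 0 < ε) :
    TPset P G ε = gridFat ε P ∩ gridFat (2 * ε) G := by
  rw [TPset, thick_fg hε0.le, thick_fg (by linarith : (0:ℝ) ≤ 2 * ε)]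

lemma FP_eq (hε0 : 0 < ε) :
    FPset P G ε = gridFat ε P \ gridFat (2 * ε) G := by
  rw [FPset, thick_fg hε0.le, thick_fg (by linarith : (0:ℝ) ≤ 2 * ε), Set.diff_eq]

lemma FN_eq (hε0 : 0 < ε) :
    FNset P G ε = gridFat (2 * ε) G \ gridFat ε P := by
  rw [FNset, thick_fg hε0.le, thick_fg (by linarith : (0:ℝ) ≤ 2 * ε), Set.diff_eq,
    Set.inter_comm]

lemma U_eq (hε0 : 0 < ε) :
    thick ε (fg P) ∪ thick (2 * ε) (fg G) = gridFat ε P ∪ gridFat (2 * ε) G := by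
  rw [thick_fg hε0.le, thick_fg (by linarith : (0:ℝ) ≤ 2 * ε)]

lemma not_nat_diff {t : ℝ} (h0 : 0 < t) (h1 : t < 1) (m n : ℕ) : (m : ℝ) + t ≠ (n : ℝ) := by
  intro h
  rcases le_or_gt n m with hh | hh
  · have : (n : ℝ) ≤ m := Nat.cast_le.2 hh
    linarith
  · have : (m : ℝ) + 1 ≤ n := by exact_mod_cast Nat.succ_le_of_lt hh
    linarith

lemma sep_eps (hε0 : 0 < ε) (hε : ε < 1 / 4) (S₁ S₂ : Set (ℕ × ℕ)) :
    ∀ e₁ ∈ EP ε S₁, ∀ e₂ ∈ EP (2 * ε) S₂, e₁ ≠ e₂ := by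
  have key : ∀ m n : ℕ,
      ((m : ℝ) - 1 - ε ≠ (n : ℝ) - 1 - 2 * ε) ∧ ((m : ℝ) - 1 - ε ≠ (n : ℝ) + 2 * ε) ∧
      ((m : ℝ) + ε ≠ (n : ℝ) - 1 - 2 * ε) ∧ ((m : ℝ) + ε ≠ (n : ℝ) + 2 * ε) := by
    intro m n
    refine ⟨fun h => ?_, fun h => ?_, fun h => ?_, fun h => ?_⟩
    · exact not_nat_diff hε0 (by linarith) m n (by linarith)
    · exact not_nat_diff (t := 3 * ε) (by linarith) (by linarith) (n + 1) m
        (by push_cast; linarith)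
    · exact not_nat_diff (t := 3 * ε) (by linarith) (by linarith) (m + 1) n
        (by push_cast; linarith)
    · exact not_nat_diff hε0 (by linarith) n m (by linarith)
  rintro e₁ ⟨p, hp, h⟩ e₂ ⟨p', hp', h'⟩
  simp only [A0, B0, A1, B1] at h h'
  rcases h with h | h | h | h <;> rcases h' with h' | h' | h' | h' <;> subst h <;> subst h' <;>
    first
      | exact (key _ _).1
      | exact (key _ _).2.1
      | exact (key _ _).2.2.1
      | exact (key _ _).2.2.2

lemma ball_subset_box {x : Plane} {r : ℝ} : Metric.ball x r ⊆ Box x r := by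
  intro v hv
  rw [Metric.mem_ball, dist_eq_norm] at hv
  constructor
  · calc |v 0 - x 0| = ‖(v - x) 0‖ := by simp [Pi.sub_apply, Real.norm_eq_abs]
      _ ≤ ‖v - x‖ := norm_le_pi_norm _ 0
      _ ≤ r := hv.le
  · calc |v 1 - x 1| = ‖(v - x) 1‖ := by simp [Pi.sub_apply, Real.norm_eq_abs]
      _ ≤ ‖v - x‖ := norm_le_pi_norm _ 1
      _ ≤ r := hv.le

lemma box_subset_ball {x : Plane} {r R : ℝ} (hr : 0 ≤ r) (hrR : r < R) :
    Box x r ⊆ Metric.ball x R := by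
  intro v hv
  rw [Metric.mem_ball, dist_eq_norm]
  calc ‖v - x‖ ≤ r := by
        rw [norm_le_iff hr]
        exact ⟨by simpa [Pi.sub_apply] using hv.1, by simpa [Pi.sub_apply] using hv.2⟩
    _ < R := hrR

lemma mem_box_self {x : Plane} {r : ℝ} (hr : 0 ≤ r) : x ∈ Box x r := by
  constructor <;> simp [hr]

lemma isClosed_ccIn {F : Set Plane} (hF : IsClosed F) (x : Plane) :
    IsClosed (connectedComponentIn F x) := by
  by_cases hx : x ∈ F
  · have h1 : closure (connectedComponentIn F x) ⊆ F :=
      hF.closure_subset_iff.2 (connectedComponentIn_subset F x)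
    have h3 : closure (connectedComponentIn F x) ⊆ connectedComponentIn F x :=
      (isPreconnected_connectedComponentIn.closure).subset_connectedComponentIn
        (subset_closure (mem_connectedComponentIn hx)) h1
    exact isClosed_of_closure_subset h3
  · rw [connectedComponentIn_eq_empty hx]
    exact isClosed_empty

/-- The value of the induced component map at a point of the union. -/
def gval (u : Plane) (T : Set Plane) : Prop :=
  (u ∈ TPset P G ε ∧ T = connectedComponentIn (TPset P G ε) u) ∨
  (u ∈ FPset P G ε ∧ IsCompOf T (TPset P G ε) ∧
    SharesEdge T (connectedComponentIn (FPset P G ε) u)) ∨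
  (u ∈ FNset P G ε ∧ IsCompOf T (TPset P G ε) ∧
    SharesEdge T (connectedComponentIn (FNset P G ε) u))

lemma mem_cases {u : Plane} (hu : u ∈ thick ε (fg P) ∪ thick (2 * ε) (fg G)) :
    u ∈ TPset P G ε ∨ u ∈ FPset P G ε ∨ u ∈ FNset P G ε := by
  by_cases h1 : u ∈ thick ε (fg P) <;> by_cases h2 : u ∈ thick (2 * ε) (fg G)
  · exact Or.inl ⟨h1, h2⟩
  · exact Or.inr (Or.inl ⟨h1, h2⟩)
  · exact Or.inr (Or.inr ⟨h1, h2⟩)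
  · rcases hu with h | h
    · exact absurd h h1
    · exact absurd h h2

lemma gval_exists (hz : ZeroLoss P G ε) {u : Plane}
    (hu : u ∈ thick ε (fg P) ∪ thick (2 * ε) (fg G)) : ∃ T, gval P G ε u T := by
  rcases mem_cases P G ε hu with h | h | h
  · exact ⟨_, Or.inl ⟨h, rfl⟩⟩
  · obtain ⟨T, hT, -⟩ := (hz.1 _ ⟨u, h, rfl⟩).1
    exact ⟨T, Or.inr (Or.inl ⟨h, hT.1, hT.2⟩)⟩
  · obtain ⟨T, hT, -⟩ := (hz.2 _ ⟨u, h, rfl⟩).1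
    exact ⟨T, Or.inr (Or.inr ⟨h, hT.1, hT.2⟩)⟩

lemma gval_unique (hz : ZeroLoss P G ε) {u : Plane} {T T' : Set Plane}
    (h : gval P G ε u T) (h' : gval P G ε u T') : T = T' := by
  rcases h with h | h | h <;> rcases h' with h' | h' | h'
  · rw [h.2, h'.2]
  · exact absurd h.1.2 h'.1.2
  · exact absurd h.1.1 h'.1.1
  · exact absurd h'.1.2 h.1.2
  · exact (hz.1 _ ⟨u, h.1, rfl⟩).1.unique ⟨h.2.1, h.2.2⟩ ⟨h'.2.1, h'.2.2⟩
  · exact absurd h'.1.2 h.1.2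
  · exact absurd h'.1.1 h.1.1
  · exact absurd h.1.2 h'.1.2
  · exact (hz.2 _ ⟨u, h.1, rfl⟩).1.unique ⟨h.2.1, h.2.2⟩ ⟨h'.2.1, h'.2.2⟩

end ZL



namespace ZL

variable (P G : Set (ℕ × ℕ)) (ε : ℝ)

lemma gval_locally_const (hε0 : 0 < ε) (hε : ε < 1 / 4) (hP : P.Finite) (hG : G.Finite)
    {u : Plane} (hu : u ∈ thick ε (fg P) ∪ thick (2 * ε) (fg G)) :
    ∃ r > 0, ∀ v ∈ (thick ε (fg P) ∪ thick (2 * ε) (fg G)) ∩ Metric.ball u r,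
      ∀ T, gval P G ε u T → gval P G ε v T := by
  have h2ε : 0 < 2 * ε := by linarith
  have hsep := sep_eps ε hε0 hε P G
  have hsep' : ∀ e₁ ∈ EP (2 * ε) G, ∀ e₂ ∈ EP ε P, e₁ ≠ e₂ :=
    fun e₁ h1 e₂ h2 => (hsep e₂ h2 e₁ h1).symm
  rcases mem_cases P G ε hu with hTP | hFP | hFN
  · -- u ∈ TP
    have huAB : u ∈ gridFat ε P ∩ gridFat (2 * ε) G := by
      rw [← TP_eq P G ε hε0]; exact hTP
    obtain ⟨r, hr, hg1, hg2⟩ := exists_goodr (δ₁ := ε) (δ₂ := 2 * ε) hP hG u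
    refine ⟨r, hr, ?_⟩
    rintro v ⟨hvU, hvball⟩ T hgT
    have hTeq : T = connectedComponentIn (TPset P G ε) u := by
      rcases hgT with h | h | h
      · exact h.2
      · exact absurd hTP.2 h.1.2
      · exact absurd hTP.1 h.1.1
    subst hTeq
    have hpre : IsPreconnected (gridFat ε P ∩ gridFat (2 * ε) G ∩ Box u r) :=
      tp_box_preconn hε0 h2ε hg1 hg2
    have hsubTP : gridFat ε P ∩ gridFat (2 * ε) G ∩ Box u r ⊆ TPset P G ε := by
      rw [TP_eq P G ε hε0]; exact inter_subset_left
    have huIn : u ∈ gridFat ε P ∩ gridFat (2 * ε) G ∩ Box u r :=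
      ⟨huAB, mem_box_self hr.le⟩
    have hsubcc : gridFat ε P ∩ gridFat (2 * ε) G ∩ Box u r ⊆
        connectedComponentIn (TPset P G ε) u :=
      hpre.subset_connectedComponentIn huIn hsubTP
    have hvbox : v ∈ Box u r := ball_subset_box hvball
    rcases mem_cases P G ε hvU with hvTP | hvFP | hvFN
    · left
      refine ⟨hvTP, ?_⟩
      have hvIn : v ∈ gridFat ε P ∩ gridFat (2 * ε) G ∩ Box u r :=
        ⟨by rw [← TP_eq P G ε hε0]; exact hvTP, hvbox⟩
      exact connectedComponentIn_eq (hsubcc hvIn)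
    · right; left
      refine ⟨hvFP, ⟨u, hTP, rfl⟩, ?_⟩
      have hvd : v ∈ (gridFat ε P \ gridFat (2 * ε) G) ∩ Box u r :=
        ⟨by rw [← FP_eq P G ε hε0]; exact hvFP, hvbox⟩
      obtain ⟨W, hWsub, hWpre, hvW, I, hIsub, hIinf⟩ :=
        tp_walk hε0 h2ε hg1 hg2 hsep huAB.2 hvd
      have hWFP : W ⊆ FPset P G ε := by rw [FP_eq P G ε hε0]; exact hWsub
      have hWD : W ⊆ connectedComponentIn (FPset P G ε) v :=
        hWpre.subset_connectedComponentIn hvW hWFP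
      apply Set.Infinite.mono ?_ hIinf
      intro w hw
      obtain ⟨hwW, hwTPbox⟩ := hIsub hw
      exact ⟨subset_closure (hsubcc hwTPbox), closure_mono hWD hwW⟩
    · right; right
      refine ⟨hvFN, ⟨u, hTP, rfl⟩, ?_⟩
      have hvd : v ∈ (gridFat (2 * ε) G \ gridFat ε P) ∩ Box u r :=
        ⟨by rw [← FN_eq P G ε hε0]; exact hvFN, hvbox⟩
      obtain ⟨W, hWsub, hWpre, hvW, I, hIsub, hIinf⟩ :=
        tp_walk h2ε hε0 hg2 hg1 hsep' huAB.1 hvd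
      have hWFN : W ⊆ FNset P G ε := by rw [FN_eq P G ε hε0]; exact hWsub
      have hWD : W ⊆ connectedComponentIn (FNset P G ε) v :=
        hWpre.subset_connectedComponentIn hvW hWFN
      apply Set.Infinite.mono ?_ hIinf
      intro w hw
      obtain ⟨hwW, hwTPbox⟩ := hIsub hw
      refine ⟨subset_closure (hsubcc ⟨⟨hwTPbox.1.2, hwTPbox.1.1⟩, hwTPbox.2⟩),
        closure_mono hWD hwW⟩
  · -- u ∈ FP
    have huA : u ∈ gridFat ε P := by
      have := hFP.1; rwa [thick_fg hε0.le] at this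
    have huB : u ∈ (gridFat (2 * ε) G)ᶜ := by
      have := hFP.2; rwa [thick_fg h2ε.le] at this
    have hBclosed : IsClosed (gridFat (2 * ε) G) := isClosed_gridFat hG
    obtain ⟨r₁, hr₁, hball₁⟩ := Metric.isOpen_iff.1 hBclosed.isOpen_compl u huB
    obtain ⟨r₂, hr₂, hg1, hg2⟩ := exists_goodr (δ₁ := ε) (δ₂ := 2 * ε) hP hG u
    have hr : 0 < min (r₁ / 2) r₂ := lt_min (by linarith) hr₂
    refine ⟨min (r₁ / 2) r₂, hr, ?_⟩
    rintro v ⟨hvU, hvball⟩ T hgT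
    have hvbox : v ∈ Box u (min (r₁ / 2) r₂) := ball_subset_box hvball
    have hboxB : ∀ w ∈ Box u (min (r₁ / 2) r₂), w ∉ gridFat (2 * ε) G := by
      intro w hw hwB
      exact hball₁ (box_subset_ball hr.le
        (lt_of_le_of_lt (min_le_left _ _) (by linarith)) hw) hwB
    have hpre : IsPreconnected (gridFat ε P ∩ Box u (min (r₁ / 2) r₂)) :=
      grid_box_preconn hε0 (goodr_mono hg1 hr (min_le_right _ _))
    have hsubFP : gridFat ε P ∩ Box u (min (r₁ / 2) r₂) ⊆ FPset P G ε := by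
      rw [FP_eq P G ε hε0]
      exact fun w hw => ⟨hw.1, hboxB w hw.2⟩
    have huIn : u ∈ gridFat ε P ∩ Box u (min (r₁ / 2) r₂) := ⟨huA, mem_box_self hr.le⟩
    have hvA : v ∈ gridFat ε P := by
      rw [U_eq P G ε hε0] at hvU
      rcases hvU with h | h
      · exact h
      · exact absurd h (hboxB v hvbox)
    have hvIn : v ∈ gridFat ε P ∩ Box u (min (r₁ / 2) r₂) := ⟨hvA, hvbox⟩
    have hccEq : connectedComponentIn (FPset P G ε) u =
        connectedComponentIn (FPset P G ε) v :=
      connectedComponentIn_eq (hpre.subset_connectedComponentIn huIn hsubFP hvIn)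
    rcases hgT with h | h | h
    · exact absurd h.1.2 hFP.2
    · exact Or.inr (Or.inl ⟨hsubFP hvIn, h.2.1, hccEq ▸ h.2.2⟩)
    · exact absurd hFP.1 h.1.1
  · -- u ∈ FN
    have huB : u ∈ gridFat (2 * ε) G := by
      have := hFN.2; rwa [thick_fg h2ε.le] at this
    have huA : u ∈ (gridFat ε P)ᶜ := by
      have := hFN.1; rwa [thick_fg hε0.le] at this
    have hAclosed : IsClosed (gridFat ε P) := isClosed_gridFat hP
    obtain ⟨r₁, hr₁, hball₁⟩ := Metric.isOpen_iff.1 hAclosed.isOpen_compl u huA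
    obtain ⟨r₂, hr₂, hg1, hg2⟩ := exists_goodr (δ₁ := ε) (δ₂ := 2 * ε) hP hG u
    have hr : 0 < min (r₁ / 2) r₂ := lt_min (by linarith) hr₂
    refine ⟨min (r₁ / 2) r₂, hr, ?_⟩
    rintro v ⟨hvU, hvball⟩ T hgT
    have hvbox : v ∈ Box u (min (r₁ / 2) r₂) := ball_subset_box hvball
    have hboxA : ∀ w ∈ Box u (min (r₁ / 2) r₂), w ∉ gridFat ε P := by
      intro w hw hwA
      exact hball₁ (box_subset_ball hr.le
        (lt_of_le_of_lt (min_le_left _ _) (by linarith)) hw) hwA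
    have hpre : IsPreconnected (gridFat (2 * ε) G ∩ Box u (min (r₁ / 2) r₂)) :=
      grid_box_preconn h2ε (goodr_mono hg2 hr (min_le_right _ _))
    have hsubFN : gridFat (2 * ε) G ∩ Box u (min (r₁ / 2) r₂) ⊆ FNset P G ε := by
      rw [FN_eq P G ε hε0]
      exact fun w hw => ⟨hw.1, hboxA w hw.2⟩
    have huIn : u ∈ gridFat (2 * ε) G ∩ Box u (min (r₁ / 2) r₂) := ⟨huB, mem_box_self hr.le⟩
    have hvB : v ∈ gridFat (2 * ε) G := by
      rw [U_eq P G ε hε0] at hvU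
      rcases hvU with h | h
      · exact absurd h (hboxA v hvbox)
      · exact h
    have hvIn : v ∈ gridFat (2 * ε) G ∩ Box u (min (r₁ / 2) r₂) := ⟨hvB, hvbox⟩
    have hccEq : connectedComponentIn (FNset P G ε) u =
        connectedComponentIn (FNset P G ε) v :=
      connectedComponentIn_eq (hpre.subset_connectedComponentIn huIn hsubFN hvIn)
    rcases hgT with h | h | h
    · exact absurd h.1.1 hFN.1
    · exact absurd hFN.2 h.1.2
    · exact Or.inr (Or.inr ⟨hsubFN hvIn, h.2.1, hccEq ▸ h.2.2⟩)

lemma gval_const_on (hε0 : 0 < ε) (hε : ε < 1 / 4) (hP : P.Finite) (hG : G.Finite)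
    (hz : ZeroLoss P G ε) {K : Set Plane}
    (hKU : K ⊆ thick ε (fg P) ∪ thick (2 * ε) (fg G)) (hK : IsPreconnected K)
    {x y : Plane} {T : Set Plane} (hx : x ∈ K) (hy : y ∈ K) (hgx : gval P G ε x T) :
    gval P G ε y T := by
  classical
  by_contra hgy
  have hchoice : ∀ u : Plane, ∃ r, 0 < r ∧ (u ∈ K →
      ∀ v ∈ (thick ε (fg P) ∪ thick (2 * ε) (fg G)) ∩ Metric.ball u r,
      ∀ T', gval P G ε u T' → gval P G ε v T') := by
    intro u
    by_cases hu : u ∈ K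
    · obtain ⟨r, hr, hc⟩ := gval_locally_const P G ε hε0 hε hP hG (hKU hu)
      exact ⟨r, hr, fun _ => hc⟩
    · exact ⟨1, one_pos, fun h => absurd h hu⟩
  choose rad hrad hconst using hchoice
  set Va := ⋃ u ∈ {w | w ∈ K ∧ gval P G ε w T}, Metric.ball u (rad u) with hVa
  set Vb := ⋃ u ∈ {w | w ∈ K ∧ ¬ gval P G ε w T}, Metric.ball u (rad u) with hVb
  have hVaopen : IsOpen Va := isOpen_biUnion fun _ _ => Metric.isOpen_ball
  have hVbopen : IsOpen Vb := isOpen_biUnion fun _ _ => Metric.isOpen_ball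
  have hKcover : K ⊆ Va ∪ Vb := by
    intro u hu
    by_cases h : gval P G ε u T
    · exact Or.inl (mem_biUnion (⟨hu, h⟩ : u ∈ {w | w ∈ K ∧ gval P G ε w T})
        (Metric.mem_ball_self (hrad u)))
    · exact Or.inr (mem_biUnion (⟨hu, h⟩ : u ∈ {w | w ∈ K ∧ ¬ gval P G ε w T})
        (Metric.mem_ball_self (hrad u)))
  have hne1 : (K ∩ Va).Nonempty :=
    ⟨x, hx, mem_biUnion (⟨hx, hgx⟩ : x ∈ {w | w ∈ K ∧ gval P G ε w T})
      (Metric.mem_ball_self (hrad x))⟩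
  have hne2 : (K ∩ Vb).Nonempty :=
    ⟨y, hy, mem_biUnion (⟨hy, hgy⟩ : y ∈ {w | w ∈ K ∧ ¬ gval P G ε w T})
      (Metric.mem_ball_self (hrad y))⟩
  obtain ⟨v, hvK, hva, hvb⟩ := hK Va Vb hVaopen hVbopen hKcover hne1 hne2
  rw [hVa, mem_iUnion₂] at hva
  rw [hVb, mem_iUnion₂] at hvb
  obtain ⟨u₁, hu₁, hvb₁⟩ := hva
  obtain ⟨u₂, hu₂, hvb₂⟩ := hvb
  have hvU : v ∈ thick ε (fg P) ∪ thick (2 * ε) (fg G) := hKU hvK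
  have h1 : gval P G ε v T := hconst u₁ hu₁.1 v ⟨hvU, hvb₁⟩ T hu₁.2
  obtain ⟨T₂, hT₂⟩ := gval_exists P G ε hz (hKU hu₂.1)
  have h2 : gval P G ε v T₂ := hconst u₂ hu₂.1 v ⟨hvU, hvb₂⟩ T₂ hT₂
  have hTT : T₂ = T := gval_unique P G ε hz h2 h1
  exact hu₂.2 (hTT ▸ hT₂)

end ZL


namespace ZL

lemma surj_pt (P G : Set (ℕ × ℕ)) (ε : ℝ) (hε0 : 0 < ε) (hP : P.Finite) (hG : G.Finite)
    (hz : ZeroLoss P G ε) {u : Plane} (hu : u ∈ thick ε (fg P) ∪ thick (2 * ε) (fg G)) :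
    ∃ z ∈ TPset P G ε,
      connectedComponentIn (thick ε (fg P) ∪ thick (2 * ε) (fg G)) u =
      connectedComponentIn (thick ε (fg P) ∪ thick (2 * ε) (fg G)) z := by
  have hTPclosed : IsClosed (TPset P G ε) := by
    rw [TP_eq P G ε hε0]
    exact (isClosed_gridFat hP).inter (isClosed_gridFat hG)
  rcases mem_cases P G ε hu with hTP | hFP | hFN
  · exact ⟨u, hTP, rfl⟩
  · obtain ⟨T, ⟨hTcomp, hTshare⟩, -⟩ := (hz.1 _ ⟨u, hFP, rfl⟩).1
    obtain ⟨w, hwTP, hTw⟩ := hTcomp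
    have hTclosed : IsClosed T := by rw [hTw]; exact isClosed_ccIn hTPclosed w
    obtain ⟨z, hzT, hzD⟩ := hTshare.nonempty
    rw [hTclosed.closure_eq] at hzT
    have hzTP : z ∈ TPset P G ε := by
      rw [hTw] at hzT
      exact connectedComponentIn_subset _ _ hzT
    refine ⟨z, hzTP, ?_⟩
    have hspre : IsPreconnected (insert z (connectedComponentIn (FPset P G ε) u)) :=
      (isPreconnected_connectedComponentIn).subset_closure (subset_insert _ _)
        (insert_subset hzD subset_closure)
    have hsU : insert z (connectedComponentIn (FPset P G ε) u) ⊆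
        thick ε (fg P) ∪ thick (2 * ε) (fg G) :=
      insert_subset (Or.inl hzTP.1)
        (fun v hv => Or.inl (connectedComponentIn_subset _ _ hv).1)
    have hus : u ∈ insert z (connectedComponentIn (FPset P G ε) u) :=
      mem_insert_of_mem _ (mem_connectedComponentIn hFP)
    exact connectedComponentIn_eq
      (hspre.subset_connectedComponentIn hus hsU (mem_insert _ _))
  · obtain ⟨T, ⟨hTcomp, hTshare⟩, -⟩ := (hz.2 _ ⟨u, hFN, rfl⟩).1
    obtain ⟨w, hwTP, hTw⟩ := hTcomp
    have hTclosed : IsClosed T := by rw [hTw]; exact isClosed_ccIn hTPclosed w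
    obtain ⟨z, hzT, hzD⟩ := hTshare.nonempty
    rw [hTclosed.closure_eq] at hzT
    have hzTP : z ∈ TPset P G ε := by
      rw [hTw] at hzT
      exact connectedComponentIn_subset _ _ hzT
    refine ⟨z, hzTP, ?_⟩
    have hspre : IsPreconnected (insert z (connectedComponentIn (FNset P G ε) u)) :=
      (isPreconnected_connectedComponentIn).subset_closure (subset_insert _ _)
        (insert_subset hzD subset_closure)
    have hsU : insert z (connectedComponentIn (FNset P G ε) u) ⊆
        thick ε (fg P) ∪ thick (2 * ε) (fg G) :=
      insert_subset (Or.inl hzTP.1)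
        (fun v hv => Or.inr (connectedComponentIn_subset _ _ hv).2)
    have hus : u ∈ insert z (connectedComponentIn (FNset P G ε) u) :=
      mem_insert_of_mem _ (mem_connectedComponentIn hFN)
    exact connectedComponentIn_eq
      (hspre.subset_connectedComponentIn hus hsU (mem_insert _ _))

lemma inj_pt (P G : Set (ℕ × ℕ)) (ε : ℝ) (hε0 : 0 < ε) (hε : ε < 1 / 4) (hP : P.Finite)
    (hG : G.Finite) (hz : ZeroLoss P G ε) {z₁ z₂ : Plane} (h₁ : z₁ ∈ TPset P G ε)
    (h₂ : z₂ ∈ TPset P G ε)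
    (hcc : connectedComponentIn (thick ε (fg P) ∪ thick (2 * ε) (fg G)) z₁ =
      connectedComponentIn (thick ε (fg P) ∪ thick (2 * ε) (fg G)) z₂) :
    connectedComponentIn (TPset P G ε) z₁ = connectedComponentIn (TPset P G ε) z₂ := by
  have hz₁U : z₁ ∈ thick ε (fg P) ∪ thick (2 * ε) (fg G) := Or.inl h₁.1
  have hz₂U : z₂ ∈ thick ε (fg P) ∪ thick (2 * ε) (fg G) := Or.inl h₂.1
  have hmem : z₂ ∈ connectedComponentIn (thick ε (fg P) ∪ thick (2 * ε) (fg G)) z₁ := by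
    rw [hcc]; exact mem_connectedComponentIn hz₂U
  have hval : gval P G ε z₂ (connectedComponentIn (TPset P G ε) z₁) :=
    gval_const_on P G ε hε0 hε hP hG hz
      (connectedComponentIn_subset _ _) isPreconnected_connectedComponentIn
      (mem_connectedComponentIn hz₁U) hmem (Or.inl ⟨h₁, rfl⟩)
  rcases hval with h | h | h
  · exact h.2
  · exact absurd h₂.2 h.1.2
  · exact absurd h₂.1 h.1.1

end ZL

/-- Under the zero-loss hypothesis, the inclusion
`TP ↪ F_ε(P) ∪ F_{2ε}(G)` (sending the component of `x` in `TP` to the component of `x` in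
the union) induces a bijection on connected components. -/
theorem zero_loss_components_bijection_foreground
    (h w : ℕ) (P G : Set (ℕ × ℕ)) (hP : OnGrid P h w) (hG : OnGrid G h w)
    (ε : ℝ) (hε0 : 0 < ε) (hε : ε < 1 / 4) (hzero : ZeroLoss P G ε) :
    Function.Bijective
      (continuous_inclusion (TPset_subset_union P G ε)).connectedComponentsMap := by
  classical
  have hPfin := ZL.onGrid_finite hP
  have hGfin := ZL.onGrid_finite hG
  constructor
  · -- injectivity
    intro a b hab
    obtain ⟨t, rfl⟩ := ConnectedComponents.surjective_coe a
    obtain ⟨s, rfl⟩ := ConnectedComponents.surjective_coe b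
    have hab2 : connectedComponent (Set.inclusion (TPset_subset_union P G ε) t) =
        connectedComponent (Set.inclusion (TPset_subset_union P G ε) s) :=
      ConnectedComponents.coe_eq_coe.1 hab
    have hmem : Set.inclusion (TPset_subset_union P G ε) s ∈
        connectedComponent (Set.inclusion (TPset_subset_union P G ε) t) := by
      rw [hab2]; exact mem_connectedComponent
    have hmem' : (s : Plane) ∈
        connectedComponentIn (thick ε (fg P) ∪ thick (2 * ε) (fg G)) (t : Plane) := by
      rw [connectedComponentIn_eq_image (TPset_subset_union P G ε t.2)]
      exact ⟨Set.inclusion (TPset_subset_union P G ε) s, hmem, rfl⟩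
    have hccU := connectedComponentIn_eq hmem'
    have hccTP := ZL.inj_pt P G ε hε0 hε hPfin hGfin hzero t.2 s.2 hccU
    have himg : (Subtype.val : ↥(TPset P G ε) → Plane) '' connectedComponent t =
        Subtype.val '' connectedComponent s := by
      rw [← connectedComponentIn_eq_image t.2, ← connectedComponentIn_eq_image s.2]
      exact hccTP
    exact ConnectedComponents.coe_eq_coe.2
      ((Set.image_eq_image Subtype.coe_injective).1 himg)
  · -- surjectivity
    intro b
    obtain ⟨w, rfl⟩ := ConnectedComponents.surjective_coe b
    obtain ⟨z, hzTP, hcc⟩ := ZL.surj_pt P G ε hε0 hPfin hGfin hzero w.2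
    refine ⟨((⟨z, hzTP⟩ : ↥(TPset P G ε)) : ConnectedComponents ↥(TPset P G ε)), ?_⟩
    have hzU : z ∈ thick ε (fg P) ∪ thick (2 * ε) (fg G) := Or.inl hzTP.1
    have hzmem : z ∈ connectedComponentIn (thick ε (fg P) ∪ thick (2 * ε) (fg G)) (w : Plane) := by
      rw [hcc]; exact mem_connectedComponentIn hzU
    rw [connectedComponentIn_eq_image w.2] at hzmem
    obtain ⟨w', hw', hwz⟩ := hzmem
    have heq : Set.inclusion (TPset_subset_union P G ε) ⟨z, hzTP⟩ = w' :=
      Subtype.ext hwz.symm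
    have hfinal : connectedComponent (Set.inclusion (TPset_subset_union P G ε) ⟨z, hzTP⟩) =
        connectedComponent w := by
      rw [heq]
      exact (connectedComponent_eq hw').symm
    exact ConnectedComponents.coe_eq_coe.2 hfinal

end
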